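/- Let n₁, n₂, n₃ be pairwise orthogonal unit vectors in ℝ³ and η ∈ [0,1]. The three noisy spin-1/2 observables M₁, M₂, M₃ with effects E^k_± = (1/2)(I ± η σ·n_k) are (triplewise) jointly measurable if and only if η ≤ 1/√3. -/

import Mathlib

open Matrix ComplexOrder

noncomputable section

abbrev Mat2 := Matrix (Fin 2) (Fin 2) ℂ

/-- Pauli matrix σ₁. -/
def σ1 : Mat2 := !![0, 1; 1, 0]
/-- Pauli matrix σ₂. -/
def σ2 : Mat2 := !![0, -Complex.I; Complex.I, 0]
/-- Pauli matrix σ₃. -/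
def σ3 : Mat2 := !![1, 0; 0, -1]

/-- σ·a for a real 3-vector a. -/
def pauli (a : Fin 3 → ℝ) : Mat2 := (a 0 : ℂ) • σ1 + (a 1 : ℂ) • σ2 + (a 2 : ℂ) • σ3

/-- Euclidean inner product on ℝ³. -/
def dot3 (a b : Fin 3 → ℝ) : ℝ := a 0 * b 0 + a 1 * b 1 + a 2 * b 2

/-- Euclidean norm on ℝ³. -/
def norm3 (a : Fin 3 → ℝ) : ℝ := Real.sqrt (dot3 a a)

/-- A qubit effect: both `E` and `I - E` positive semidefinite. -/
def IsEffect (E : Mat2) : Prop := E.PosSemidef ∧ (1 - E).PosSemidef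

/-- A qubit density matrix. -/
def IsDensity (ρ : Mat2) : Prop := ρ.PosSemidef ∧ ρ.trace = 1

/-- E₊ = (1/2)(I + η σ·n). -/
def Epos (η : ℝ) (n : Fin 3 → ℝ) : Mat2 := (1/2 : ℂ) • (1 + (η : ℂ) • pauli n)
/-- E₋ = (1/2)(I - η σ·n). -/
def Eneg (η : ℝ) (n : Fin 3 → ℝ) : Mat2 := (1/2 : ℂ) • (1 - (η : ℂ) • pauli n)

/-- A pairwise joint measurement of the noisy spin-1/2 observables along nᵢ and nⱼ. -/
def IsJointMmt (η : ℝ) (ni nj : Fin 3 → ℝ) (Gpp Gpm Gmp Gmm : Mat2) : Prop :=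
  IsEffect Gpp ∧ IsEffect Gpm ∧ IsEffect Gmp ∧ IsEffect Gmm ∧
  Gpp + Gpm = Epos η ni ∧ Gmp + Gmm = Eneg η ni ∧
  Gpp + Gmp = Epos η nj ∧ Gpm + Gmm = Eneg η nj

/-- Average anticorrelation probability R₃(ρ), given the anticorrelation effects of the
three pairwise joint measurements. -/
def R3 (ρ G12pm G12mp G13pm G13mp G23pm G23mp : Mat2) : ℝ :=
  (1/3) * ((ρ * (G12pm + G12mp)).trace.re + (ρ * (G13pm + G13mp)).trace.re +
    (ρ * (G23pm + G23mp)).trace.re)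

/-- Parametric joint-measurement family. -/
def Gpp (η : ℝ) (ni nj : Fin 3 → ℝ) (α : ℝ) (a : Fin 3 → ℝ) : Mat2 :=
  (1/2 : ℂ) • (((α/2 : ℝ) : ℂ) • (1 : Mat2) + pauli ((1/2 : ℝ) • (η • (ni + nj) - a)))
def Gpm (η : ℝ) (ni nj : Fin 3 → ℝ) (α : ℝ) (a : Fin 3 → ℝ) : Mat2 :=
  (1/2 : ℂ) • (((1 - α/2 : ℝ) : ℂ) • (1 : Mat2) + pauli ((1/2 : ℝ) • (η • (ni - nj) + a)))
def Gmp (η : ℝ) (ni nj : Fin 3 → ℝ) (α : ℝ) (a : Fin 3 → ℝ) : Mat2 :=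
  (1/2 : ℂ) • (((1 - α/2 : ℝ) : ℂ) • (1 : Mat2) + pauli ((1/2 : ℝ) • (-(η • ni) + η • nj + a)))
def Gmm (η : ℝ) (ni nj : Fin 3 → ℝ) (α : ℝ) (a : Fin 3 → ℝ) : Mat2 :=
  (1/2 : ℂ) • (((α/2 : ℝ) : ℂ) • (1 : Mat2) + pauli ((1/2 : ℝ) • (-(η • (ni + nj)) - a)))

/-- Trine directions in the ZX plane. -/
def tn1 : Fin 3 → ℝ := ![0, 0, 1]
def tn2 : Fin 3 → ℝ := ![Real.sqrt 3 / 2, 0, -(1/2)]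
def tn3 : Fin 3 → ℝ := ![-(Real.sqrt 3 / 2), 0, -(1/2)]

/-- sign of a Boolean, as ±1. -/
def sgn (b : Bool) : ℝ := if b then 1 else -1

/-- m_X = Σₖ Xₖ nₖ. -/
def mvec {N : ℕ} (n : Fin N → Fin 3 → ℝ) (X : Fin N → Bool) : Fin 3 → ℝ :=
  ∑ k, sgn (X k) • n k

/-- Joint measurability of the N noisy qubit observables. -/
def JointlyMeasurable {N : ℕ} (η : ℝ) (n : Fin N → Fin 3 → ℝ) : Prop :=
  ∃ E : (Fin N → Bool) → Mat2,
    (∀ X, IsEffect (E X)) ∧ (∑ X, E X) = 1 ∧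
    (∀ k, ∑ X ∈ Finset.univ.filter (fun X => X k = true), E X = Epos η (n k)) ∧
    (∀ k, ∑ X ∈ Finset.univ.filter (fun X => X k = false), E X = Eneg η (n k))



/-!
Write `S_k = ∑_X X_k E_X`, where `X ∈ {±1}ᴺ`. Given `∑_X E_X = I`, the two marginal conditions for
the `k`-th observable say exactly that `S_k = η σ·n_k`. For orthonormal `n_k` every
`m_X = ∑_k X_k n_k` has length `√N`, so `√N I - σ·m_X ⪰ 0`; pairing this with `E_X ⪰ 0` in trace
and summing over `X` gives `0 ≤ 2√N - ∑_k tr(S_k σ·n_k) = 2√N - 2Nη`. Conversely the uniform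
mixture `E_X = 2⁻ᴺ (I + η σ·m_X)` is positive as soon as `η√N ≤ 1`, and it has the required
marginals because distinct coordinates of a uniformly random sign vector are uncorrelated.
-/

lemma pauli_eq (a : Fin 3 → ℝ) :
    pauli a = !![(a 2 : ℂ), a 0 - a 1 * Complex.I; a 0 + a 1 * Complex.I, -(a 2 : ℂ)] := by
  ext i j
  fin_cases i <;> fin_cases j <;> simp [pauli, σ1, σ2, σ3]
  ring

lemma pauli_add (a b : Fin 3 → ℝ) : pauli (a + b) = pauli a + pauli b := by
  simp only [pauli, Pi.add_apply, Complex.ofReal_add]; module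

lemma pauli_smul (c : ℝ) (a : Fin 3 → ℝ) : pauli (c • a) = (c : ℂ) • pauli a := by
  simp only [pauli, Pi.smul_apply, smul_eq_mul, Complex.ofReal_mul]; module

lemma pauli_zero : pauli 0 = 0 := by simpa using pauli_smul 0 0

lemma pauli_neg (a : Fin 3 → ℝ) : pauli (-a) = -pauli a := by simpa using pauli_smul (-1) a

lemma pauli_sum {ι : Type*} (s : Finset ι) (a : ι → Fin 3 → ℝ) :
    pauli (∑ i ∈ s, a i) = ∑ i ∈ s, pauli (a i) :=
  map_sum (AddMonoidHom.mk' pauli pauli_add) a s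

lemma isHermitian_pauli (a : Fin 3 → ℝ) : (pauli a).IsHermitian := by
  ext i j
  fin_cases i <;> fin_cases j <;> simp [pauli_eq, Complex.ext_iff]

lemma pauli_mul_self (a : Fin 3 → ℝ) : pauli a * pauli a = (dot3 a a : ℂ) • 1 := by
  ext i j
  fin_cases i <;> fin_cases j <;> simp [pauli_eq, dot3, Matrix.mul_apply, Fin.sum_univ_two] <;>
    ring_nf <;> simp [Complex.I_sq]

lemma dot3_eq_dotProduct (a b : Fin 3 → ℝ) : dot3 a b = a ⬝ᵥ b := by
  simp [dot3, dotProduct, Fin.sum_univ_three]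

lemma dot3_comm (a b : Fin 3 → ℝ) : dot3 a b = dot3 b a := by
  simp only [dot3]; ring

lemma dot3_smul_self (c : ℝ) (a : Fin 3 → ℝ) : dot3 (c • a) (c • a) = c ^ 2 * dot3 a a := by
  simp only [dot3, Pi.smul_apply, smul_eq_mul]; ring

lemma dot3_neg_self (a : Fin 3 → ℝ) : dot3 (-a) (-a) = dot3 a a := by
  simp [dot3]

lemma eq_zero_of_dot3_self_nonpos {a : Fin 3 → ℝ} (h : dot3 a a ≤ 0) : a = 0 := by
  simp only [dot3] at h
  ext i
  fin_cases i <;> simp <;> nlinarith [sq_nonneg (a 0), sq_nonneg (a 1), sq_nonneg (a 2)]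

/-- For `c > 0`, `(c • 1 + σ·a)² = 2c (c • 1 + σ·a) - (c² - |a|²) • 1` exhibits `c • 1 + σ·a` as a
positive combination of a Hermitian square and of the identity. -/
lemma posSemidef_smul_one_add_pauli {c : ℝ} {a : Fin 3 → ℝ} (hc : 0 ≤ c) (h : dot3 a a ≤ c ^ 2) :
    ((c : ℂ) • 1 + pauli a).PosSemidef := by
  rcases hc.eq_or_lt with rfl | hc
  · simpa [eq_zero_of_dot3_self_nonpos (by simpa using h), pauli_zero] using PosSemidef.zero
  set M := (c : ℂ) • (1 : Mat2) + pauli a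
  have hM : M.IsHermitian :=
    (isHermitian_one.smul ((Complex.im_eq_zero_iff_isSelfAdjoint _).1 rfl)).add
      (isHermitian_pauli a)
  have hMM : M * M = ((c : ℂ) ^ 2 + dot3 a a) • 1 + (2 * c : ℂ) • pauli a := by
    simp only [M, add_mul, mul_add, one_mul, mul_one, smul_mul_assoc, mul_smul_comm, pauli_mul_self]
    module
  have hM_eq : M = ((2 * c)⁻¹ : ℝ) • (Mᴴ * M + ((c ^ 2 - dot3 a a : ℝ) : ℂ) • 1) := by
    rw [hM.eq, hMM, ← Complex.coe_smul]
    match_scalars <;> field_simp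
    ring
  rw [hM_eq]
  refine PosSemidef.smul ((posSemidef_conjTranspose_mul_self M).add ?_) (by positivity)
  exact PosSemidef.one.smul (Complex.zero_le_real.2 (sub_nonneg.2 h))

/-- `tr (A B)` is the sum of all entries of the Hadamard product `A ⊙ Bᵀ`, which is positive
semidefinite by the Schur product theorem. -/
lemma Matrix.PosSemidef.trace_mul_nonneg {n 𝕜 : Type*} [Fintype n] [RCLike 𝕜]
    {A B : Matrix n n 𝕜} (hA : A.PosSemidef) (hB : B.PosSemidef) : 0 ≤ (A * B).trace := by
  have := (hA.hadamard hB.transpose).dotProduct_mulVec_nonneg (fun _ => 1)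
  simpa [trace, mul_apply, dotProduct, mulVec] using this

lemma sgn_not (b : Bool) : sgn (!b) = -sgn b := by cases b <;> simp [sgn]

lemma sgn_mul_self (b : Bool) : sgn b * sgn b = 1 := by cases b <;> simp [sgn]

section SignSums

variable {ι : Type*} [Fintype ι] [DecidableEq ι]

/-- Flipping the `j`-th sign is an involution of `ι → Bool` that negates `sgn (X j)`. -/
lemma sum_sgn_mul_eq_zero (j : ι) {w : (ι → Bool) → ℝ}
    (hw : ∀ X, w (Function.update X j (!X j)) = w X) : ∑ X, sgn (X j) * w X = 0 := by
  have hflip : Function.Involutive fun X : ι → Bool => Function.update X j (!X j) :=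
    fun X => by simp
  have h : ∑ X, sgn (X j) * w X = ∑ X, -(sgn (X j) * w X) :=
    Fintype.sum_bijective _ hflip.bijective _ _ fun X => by simp [sgn_not, hw]
  rw [Finset.sum_neg_distrib] at h
  linarith

lemma sum_sgn (j : ι) : ∑ X : ι → Bool, sgn (X j) = 0 := by
  simpa using sum_sgn_mul_eq_zero j (w := fun _ => 1) fun _ => rfl

lemma sum_sgn_mul_sgn (j k : ι) :
    ∑ X : ι → Bool, sgn (X j) * sgn (X k) = if j = k then 2 ^ Fintype.card ι else 0 := by
  split_ifs with hjk
  · subst hjk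
    simp [sgn_mul_self]
  · exact sum_sgn_mul_eq_zero j fun X => by rw [Function.update_of_ne (Ne.symm hjk)]

end SignSums

section Marginals

variable {α M : Type*} [Fintype α] [AddCommGroup M] [Module ℂ M]

lemma sum_filter_eq_true (s : α → Bool) (E : α → M) :
    ∑ X ∈ Finset.univ.filter (fun X => s X = true), E X =
      (1 / 2 : ℂ) • (∑ X, E X + ∑ X, (sgn (s X) : ℂ) • E X) := by
  rw [Finset.sum_filter, ← Finset.sum_add_distrib, Finset.smul_sum]
  refine Finset.sum_congr rfl fun X _ => ?_
  cases s X <;> norm_num [sgn]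
  module

lemma sum_filter_eq_false (s : α → Bool) (E : α → M) :
    ∑ X ∈ Finset.univ.filter (fun X => s X = false), E X =
      (1 / 2 : ℂ) • (∑ X, E X - ∑ X, (sgn (s X) : ℂ) • E X) := by
  rw [Finset.sum_filter, ← Finset.sum_sub_distrib, Finset.smul_sum]
  refine Finset.sum_congr rfl fun X _ => ?_
  cases s X <;> norm_num [sgn]
  module

end Marginals

lemma isEffect_of_sum_eq_one {α : Type*} [Fintype α] [DecidableEq α] {E : α → Mat2}
    (hE : ∀ X, (E X).PosSemidef) (hsum : ∑ X, E X = 1) (X : α) : IsEffect (E X) := by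
  refine ⟨hE X, ?_⟩
  rw [← hsum, ← Finset.add_sum_erase _ _ (Finset.mem_univ X), add_sub_cancel_left]
  exact posSemidef_sum _ fun Y _ => hE Y

lemma jointlyMeasurable_iff {N : ℕ} {η : ℝ} {n : Fin N → Fin 3 → ℝ} :
    JointlyMeasurable η n ↔ ∃ E : (Fin N → Bool) → Mat2, (∀ X, IsEffect (E X)) ∧
      ∑ X, E X = 1 ∧ ∀ k, ∑ X, (sgn (X k) : ℂ) • E X = (η : ℂ) • pauli (n k) := by
  refine exists_congr fun E => and_congr_right fun _ => and_congr_right fun hsum => ?_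
  have hpos k : ∑ X ∈ Finset.univ.filter (fun X => X k = true), E X =
      (1 / 2 : ℂ) • (1 + ∑ X, (sgn (X k) : ℂ) • E X) := by
    rw [sum_filter_eq_true (fun X : Fin N → Bool => X k), hsum]
  have hneg k : ∑ X ∈ Finset.univ.filter (fun X => X k = false), E X =
      (1 / 2 : ℂ) • (1 - ∑ X, (sgn (X k) : ℂ) • E X) := by
    rw [sum_filter_eq_false (fun X : Fin N → Bool => X k), hsum]
  simp only [hpos, hneg, Epos, Eneg]
  constructor
  · rintro ⟨h, -⟩ k
    simpa using h k
  · intro h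
    exact ⟨fun k => by rw [h k], fun k => by rw [h k]⟩

section SignedSums

variable {N : ℕ} (n : Fin N → Fin 3 → ℝ)

lemma sum_mvec : ∑ X, mvec n X = 0 := by
  simp only [mvec]
  rw [Finset.sum_comm]
  simp [← Finset.sum_smul, sum_sgn]

lemma sum_sgn_smul_mvec (k : Fin N) : ∑ X, sgn (X k) • mvec n X = (2 ^ N : ℝ) • n k := by
  simp only [mvec, Finset.smul_sum, smul_smul]
  rw [Finset.sum_comm]
  simp [← Finset.sum_smul, sum_sgn_mul_sgn]

lemma pauli_mvec (X : Fin N → Bool) : pauli (mvec n X) = ∑ k, (sgn (X k) : ℂ) • pauli (n k) := by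
  simp [mvec, pauli_sum, pauli_smul]

lemma sum_trace_mul_pauli_mvec (E : (Fin N → Bool) → Mat2) :
    ∑ X, (E X * pauli (mvec n X)).trace =
      ∑ k, ((∑ X, (sgn (X k) : ℂ) • E X) * pauli (n k)).trace := by
  simp only [pauli_mvec, Matrix.mul_sum, Matrix.sum_mul, trace_sum, mul_smul_comm, smul_mul_assoc,
    trace_smul]
  exact Finset.sum_comm

end SignedSums

section Orthonormal

variable {N : ℕ} {n : Fin N → Fin 3 → ℝ}

lemma dot3_mvec_self (hn : ∀ j k, dot3 (n j) (n k) = if j = k then 1 else 0) (X : Fin N → Bool) :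
    dot3 (mvec n X) (mvec n X) = N := by
  rw [dot3_eq_dotProduct]
  simp only [mvec, sum_dotProduct, dotProduct_sum, smul_dotProduct, dotProduct_smul]
  simp_rw [← dot3_eq_dotProduct, hn]
  simp [sgn_mul_self]

lemma sum_trace_mul_pauli_mvec_of_orthonormal
    (hn : ∀ j k, dot3 (n j) (n k) = if j = k then 1 else 0)
    {η : ℝ} {E : (Fin N → Bool) → Mat2}
    (hcorr : ∀ k, ∑ X, (sgn (X k) : ℂ) • E X = (η : ℂ) • pauli (n k)) :
    ∑ X, (E X * pauli (mvec n X)).trace = 2 * N * η := by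
  rw [sum_trace_mul_pauli_mvec]
  simp only [hcorr, smul_mul_assoc, pauli_mul_self, hn, if_true]
  simp
  ring

theorem mul_sqrt_le_one_of_jointlyMeasurable
    (hn : ∀ j k, dot3 (n j) (n k) = if j = k then 1 else 0) {η : ℝ}
    (h : JointlyMeasurable η n) : η * Real.sqrt N ≤ 1 := by
  obtain ⟨E, hE, hsum, hcorr⟩ := jointlyMeasurable_iff.1 h
  have hnonneg X : 0 ≤ (E X * ((Real.sqrt N : ℂ) • 1 + pauli (-mvec n X))).trace :=
    (hE X).1.trace_mul_nonneg <| posSemidef_smul_one_add_pauli (Real.sqrt_nonneg _) <| by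
      rw [dot3_neg_self, dot3_mvec_self hn, Real.sq_sqrt (Nat.cast_nonneg _)]
  have htrace : ∑ X, (E X * ((Real.sqrt N : ℂ) • 1 + pauli (-mvec n X))).trace =
      ((2 * Real.sqrt N - 2 * N * η : ℝ) : ℂ) := by
    simp only [pauli_neg, mul_add, mul_neg, mul_smul_comm, mul_one, trace_add, trace_neg,
      trace_smul, Finset.sum_add_distrib, Finset.sum_neg_distrib, ← Finset.smul_sum, ← trace_sum,
      hsum, sum_trace_mul_pauli_mvec_of_orthonormal hn hcorr]
    simp
    ring
  have hle : N * η ≤ Real.sqrt N := by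
    have := Finset.sum_nonneg fun X (_ : X ∈ Finset.univ) => hnonneg X
    rw [htrace, Complex.zero_le_real] at this
    linarith
  rcases (Real.sqrt_nonneg (N : ℝ)).eq_or_lt with h0 | hpos
  · rw [← h0, mul_zero]
    exact zero_le_one
  · refine le_of_mul_le_mul_right ?_ hpos
    rwa [mul_assoc, Real.mul_self_sqrt (Nat.cast_nonneg _), one_mul, mul_comm]

theorem jointlyMeasurable_of_mul_sqrt_le_one
    (hn : ∀ j k, dot3 (n j) (n k) = if j = k then 1 else 0) {η : ℝ} (hη : 0 ≤ η)
    (h : η * Real.sqrt N ≤ 1) : JointlyMeasurable η n := by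
  set E : (Fin N → Bool) → Mat2 := fun X => ((2 : ℂ) ^ N)⁻¹ • (1 + pauli (η • mvec n X))
  have hpsd X : (E X).PosSemidef := by
    have hbloch : dot3 (η • mvec n X) (η • mvec n X) ≤ 1 ^ 2 := by
      rw [dot3_smul_self, dot3_mvec_self hn, ← Real.sq_sqrt (Nat.cast_nonneg N), ← mul_pow]
      exact pow_le_pow_left₀ (by positivity) h 2
    refine PosSemidef.smul ?_ (by positivity)
    simpa using posSemidef_smul_one_add_pauli zero_le_one hbloch
  have hsum : ∑ X, E X = 1 := by
    rw [← Finset.smul_sum, Finset.sum_add_distrib, ← pauli_sum, ← Finset.smul_sum, sum_mvec]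
    simp only [pauli_zero, smul_zero, add_zero, Finset.sum_const, Finset.card_univ,
      Fintype.card_fun, Fintype.card_bool, Fintype.card_fin, ← Nat.cast_smul_eq_nsmul ℂ]
    push_cast
    exact inv_smul_smul₀ (by norm_num) 1
  refine jointlyMeasurable_iff.2 ⟨E, isEffect_of_sum_eq_one hpsd hsum, hsum, fun k => ?_⟩
  have hterm X : (sgn (X k) : ℂ) • E X =
      ((2 : ℂ) ^ N)⁻¹ • ((sgn (X k) : ℂ) • 1 + pauli (η • sgn (X k) • mvec n X)) := by
    simp only [E, pauli_smul]
    module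
  simp only [hterm, ← Finset.smul_sum, Finset.sum_add_distrib, ← Finset.sum_smul, ← pauli_sum,
    ← Complex.ofReal_sum, sum_sgn, sum_sgn_smul_mvec]
  simp only [Complex.ofReal_zero, zero_smul, zero_add, pauli_smul]
  match_scalars
  field_simp

end Orthonormal

/-- For three pairwise orthogonal unit vectors, the noisy spin-1/2 observables are
triplewise jointly measurable iff η ≤ 1/√3. -/
theorem orthogonal_jm_iff (n₁ n₂ n₃ : Fin 3 → ℝ)
    (h1 : norm3 n₁ = 1) (h2 : norm3 n₂ = 1) (h3 : norm3 n₃ = 1)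
    (h12 : dot3 n₁ n₂ = 0) (h13 : dot3 n₁ n₃ = 0) (h23 : dot3 n₂ n₃ = 0)
    (η : ℝ) (hη : η ∈ Set.Icc (0 : ℝ) 1) :
    JointlyMeasurable η ![n₁, n₂, n₃] ↔ η ≤ 1 / Real.sqrt 3 := by
  have hunit {v : Fin 3 → ℝ} (hv : norm3 v = 1) : dot3 v v = 1 := by
    rwa [norm3, Real.sqrt_eq_one] at hv
  have hn j k : dot3 (![n₁, n₂, n₃] j) (![n₁, n₂, n₃] k) = if j = k then 1 else 0 := by
    fin_cases j <;> fin_cases k <;>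
      simp [hunit h1, hunit h2, hunit h3, h12, h13, h23, dot3_comm n₂ n₁, dot3_comm n₃ n₁,
        dot3_comm n₃ n₂]
  rw [le_div_iff₀ (by positivity)]
  exact ⟨fun h => by simpa using mul_sqrt_le_one_of_jointlyMeasurable hn h,
    fun h => jointlyMeasurable_of_mul_sqrt_le_one hn hη.1 (by simpa using h)⟩
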